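/- arXiv:1707.08026 — 5 statements merged into one kernel-verified Lean document; each statement's English description precedes it below -/
import Mathlib

section
/- Adding a simplicial vertex to a graph does not increase its toughness; that is, if G⁺ is obtained from a graph G by adding a vertex whose neighbourhood in G⁺ induces a complete graph, then the toughness of G⁺ is at most the toughness of G. -/
open SimpleGraph

/-- `t < toughness of G`: for every vertex cut `X` (a set whose removal leaves
more than one connected component), `t * (number of components of G - X) < |X|`. -/
def SimpleGraph.ToughnessGT {V : Type*} [Fintype V] (G : SimpleGraph V) (t : ℝ) : Prop :=
  ∀ X : Set V, 1 < Nat.card (G.induce Xᶜ).ConnectedComponent →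
    t * Nat.card (G.induce Xᶜ).ConnectedComponent < X.ncard

/-- `G` is `t`-tough: for every vertex cut `X`, `t * (number of components) ≤ |X|`. -/
def SimpleGraph.ToughGE {V : Type*} [Fintype V] (G : SimpleGraph V) (t : ℝ) : Prop :=
  ∀ X : Set V, 1 < Nat.card (G.induce Xᶜ).ConnectedComponent →
    t * Nat.card (G.induce Xᶜ).ConnectedComponent ≤ X.ncard

/-- `G` is a `k`-tree: it can be built from `K_k` by repeatedly adding a vertex
whose neighbourhood among the previously added vertices is a `k`-clique. -/
def SimpleGraph.IsKTree {V : Type*} [Fintype V] (k : ℕ) (G : SimpleGraph V) : Prop :=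
  k ≤ Fintype.card V ∧
    ∃ e : V ≃ Fin (Fintype.card V),
      ∀ v : V, G.IsClique {w : V | G.Adj v w ∧ e w < e v} ∧
        Set.ncard {w : V | G.Adj v w ∧ e w < e v} = min (e v : ℕ) k

/-- The bud of a vertex `v` in a `k`-tree: its neighbours of degree `k`. -/
def SimpleGraph.bud {V : Type*} (G : SimpleGraph V) (k : ℕ) (v : V) : Set V :=
  {w : V | G.Adj v w ∧ (G.neighborSet w).ncard = k}

/-- `v` is a twig of the `k`-tree `G`: `v` is not universal, the set `S` of its
neighbours of degree `k` is nonempty, and `N(v) \ S` induces `K_k`. -/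
def SimpleGraph.IsTwig {V : Type*} (G : SimpleGraph V) (k : ℕ) (v : V) : Prop :=
  (∃ w, w ≠ v ∧ ¬ G.Adj v w) ∧ (G.bud k v).Nonempty ∧
    G.IsClique (G.neighborSet v \ G.bud k v) ∧ (G.neighborSet v \ G.bud k v).ncard = k

/-- `S` is a squeeze by `v`. -/
def SimpleGraph.IsSqueeze {V : Type*} (G : SimpleGraph V) (v : V) (S : Set V) : Prop :=
  S ⊆ G.neighborSet v ∧ 1 ≤ S.ncard ∧ S.ncard ≤ 2 ∧
    2 ≤ (G.neighborSet v \ S).ncard ∧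
    (∀ s ∈ S, (G.neighborSet v \ S).ncard - 1 ≤ ((G.neighborSet v \ S) ∩ G.neighborSet s).ncard) ∧
    (∀ r ∈ G.neighborSet v \ S, S.ncard - 1 ≤ (S ∩ G.neighborSet r).ncard)

/-- A chordal graph: every cycle of length at least 4 has a chord, i.e. an edge of `G`
between two vertices of the cycle that is not an edge of the cycle. -/
def SimpleGraph.IsChordal {V : Type*} (G : SimpleGraph V) : Prop :=
  ∀ (v : V) (c : G.Walk v v), c.IsCycle → 4 ≤ c.length →
    ∃ x y, x ∈ c.support ∧ y ∈ c.support ∧ G.Adj x y ∧ s(x, y) ∉ c.edges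

/-- `H` is a minor of `G`, witnessed by branch sets. -/
def SimpleGraph.HasMinor {V W : Type*} (G : SimpleGraph V) (H : SimpleGraph W) : Prop :=
  ∃ f : W → Set V, (∀ w, (f w).Nonempty) ∧ (∀ w, (G.induce (f w)).Connected) ∧
    (Pairwise (Function.onFun Disjoint f)) ∧
    ∀ w₁ w₂, H.Adj w₁ w₂ → ∃ a ∈ f w₁, ∃ b ∈ f w₂, G.Adj a b

/-- Planarity, via Wagner's theorem: no `K₅` or `K_{3,3}` minor. -/
def SimpleGraph.IsPlanar {V : Type*} (G : SimpleGraph V) : Prop :=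
  ¬ G.HasMinor (completeGraph (Fin 5)) ∧ ¬ G.HasMinor (completeBipartiteGraph (Fin 3) (Fin 3))

/-- `G` is `k`-connected. -/
def SimpleGraph.IsKConnected {V : Type*} [Fintype V] (k : ℕ) (G : SimpleGraph V) : Prop :=
  k + 1 ≤ Fintype.card V ∧ ∀ X : Set V, X.ncard < k → (G.induce Xᶜ).Connected

/-- The square of a graph: two vertices are adjacent iff their distance is 1 or 2. -/
def SimpleGraph.square {V : Type*} (G : SimpleGraph V) : SimpleGraph V where
  Adj v w := v ≠ w ∧ (G.Adj v w ∨ ∃ u, G.Adj v u ∧ G.Adj u w)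
  symm := by
    constructor
    rintro v w ⟨hne, h | ⟨u, h1, h2⟩⟩
    · exact ⟨hne.symm, Or.inl h.symm⟩
    · exact ⟨hne.symm, Or.inr ⟨u, h2.symm, h1.symm⟩⟩
  loopless := by constructor; rintro v ⟨hne, -⟩; exact hne rfl

/-- `G` is Hamilton-connected. -/
def SimpleGraph.IsHamiltonConnected {V : Type*} (G : SimpleGraph V) : Prop :=
  ∀ x y : V, x ≠ y → ∃ p : G.Walk x y, p.IsPath ∧ ∀ w, w ∈ p.support


/-- The toughness of a graph, as an extended nonneg real; it is `⊤` for complete graphs. -/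
noncomputable def SimpleGraph.toughness {V : Type*} [Fintype V] (G : SimpleGraph V) : ENNReal :=
  ⨅ X ∈ {X : Set V | 1 < Nat.card (G.induce Xᶜ).ConnectedComponent},
    (X.ncard : ENNReal) / (Nat.card (G.induce Xᶜ).ConnectedComponent : ENNReal)


/-! A cut `X` of `G⁺ - v` is also a cut of `G⁺`, of the same size and with at least as many
components: putting the simplicial vertex `v` back cannot merge two components, since a walk
passing through `v` can jump directly between the two neighbours of `v` it uses. -/

namespace SimpleGraph

variable {V W : Type*} {H : SimpleGraph V} {K : SimpleGraph W}

/-- The second alternative in `ha` is the induction invariant: a walk entering `u` from `f a`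
leaves it to another neighbour of `u`, which is adjacent to `f a`. -/
lemma Embedding.reachable_of_walk_of_isClique_neighborSet (f : H ↪g K) {u : W}
    (hu : K.IsClique (K.neighborSet u)) (hrange : ∀ y, y ≠ u → y ∈ Set.range f)
    {y z : W} (p : K.Walk y z) (b : V)
    (hb : f b = z) (a : V) (ha : f a = y ∨ (y = u ∧ K.Adj (f a) u)) : H.Reachable a b := by
  induction p generalizing a with
  | nil =>
    rcases ha with ha | ⟨rfl, hadj⟩
    · rw [f.injective (ha.trans hb.symm)]
    · exact (f.map_adj_iff.mp (hb ▸ hadj)).reachable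
  | @cons y c z hyc p ih =>
    by_cases hcu : c = u
    · subst hcu
      refine ih hb a (.inr ⟨rfl, ?_⟩)
      rcases ha with rfl | ⟨rfl, -⟩
      · exact hyc
      · exact absurd hyc K.irrefl
    obtain ⟨c', rfl⟩ := hrange c hcu
    refine Reachable.trans ?_ (ih hb c' (.inl rfl))
    rcases ha with rfl | ⟨rfl, hau⟩
    · exact (f.map_adj_iff.mp hyc).reachable
    · by_cases hac : a = c'
      · rw [hac]
      · exact (f.map_adj_iff.mp (hu hau.symm hyc (f.injective.ne hac))).reachable

lemma Embedding.connectedComponentMap_injective_of_isClique_neighborSet (f : H ↪g K) {u : W}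
    (hu : K.IsClique (K.neighborSet u)) (hrange : ∀ y, y ≠ u → y ∈ Set.range f) :
    Function.Injective (ConnectedComponent.map f.toHom) := by
  refine ConnectedComponent.ind₂ fun a b hab => ?_
  obtain ⟨p⟩ := ConnectedComponent.eq.mp hab
  exact ConnectedComponent.sound
    (f.reachable_of_walk_of_isClique_neighborSet hu hrange p b rfl a (.inl rfl))

lemma Embedding.isClique_neighborSet (f : H ↪g K) {u : V}
    (hu : K.IsClique (K.neighborSet (f u))) : H.IsClique (H.neighborSet u) :=
  fun _ ha _ hb hab => f.map_adj_iff.mp <|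
    hu (f.map_adj_iff.mpr ha) (f.map_adj_iff.mpr hb) (f.injective.ne hab)

end SimpleGraph

theorem toughness_add_simplicial_le {V : Type*} [Fintype V] [DecidableEq V]
    (Gp : SimpleGraph V) (v : V) (hsimp : Gp.IsClique (Gp.neighborSet v)) :
    Gp.toughness ≤ (Gp.induce {x : V | x ≠ v}).toughness := by
  refine le_iInf₂ fun X (hX : 1 < _) => ?_
  set X' : Set V := Subtype.val '' X
  have hv : v ∈ X'ᶜ := fun ⟨a, _, ha⟩ => a.2 ha
  let φ : (Gp.induce {x | x ≠ v}).induce Xᶜ ↪g Gp.induce X'ᶜ :=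
    { toFun := fun a => ⟨a.1, fun ⟨b, hb, hba⟩ => a.2 (Subtype.ext hba ▸ hb)⟩
      inj' := fun _ _ h => by simpa [Subtype.ext_iff] using h
      map_rel_iff' := Iff.rfl }
  have hrange : ∀ y, y ≠ ⟨v, hv⟩ → y ∈ Set.range φ := fun ⟨x, hx⟩ hxu =>
    have hxv : x ≠ v := fun h => hxu (Subtype.ext h)
    ⟨⟨⟨x, hxv⟩, fun hX => hx ⟨_, hX, rfl⟩⟩, rfl⟩
  have hclique := (Embedding.induce X'ᶜ).isClique_neighborSet (u := ⟨v, hv⟩) hsimp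
  have hle : Nat.card ((Gp.induce {x | x ≠ v}).induce Xᶜ).ConnectedComponent
      ≤ Nat.card (Gp.induce X'ᶜ).ConnectedComponent :=
    Nat.card_le_card_of_injective _
      (φ.connectedComponentMap_injective_of_isClique_neighborSet hclique hrange)
  calc Gp.toughness
      ≤ X'.ncard / Nat.card (Gp.induce X'ᶜ).ConnectedComponent :=
        iInf₂_le X' (hX.trans_le hle)
    _ ≤ X.ncard / Nat.card ((Gp.induce {x | x ≠ v}).induce Xᶜ).ConnectedComponent := by
      rw [Set.ncard_image_of_injective X Subtype.val_injective]
      gcongr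
end

section
/- Let k ≥ 1 and let G and G⁺ be k-trees such that G is obtained from G⁺ by removing a simplicial vertex. If t is a twig in G but not in G⁺, then some vertex of the bud of t (in G) is a twig in G⁺. -/
open SimpleGraph

/-!
Deleting the simplicial vertex `v`, which has degree `k` in `G⁺`, lowers by one exactly the
degrees of its neighbours, and every degree in `G` is at least `k`. So if no vertex of the bud
of `t` is adjacent to `v`, then `N(t) \ S` is the same in `G` and `G⁺` and `t` is still a twig of
`G⁺`. Otherwise pick `s` in the bud adjacent to `v`: it has degree `k + 1` in `G⁺`, and `v` is its
only neighbour of degree `k`, since two vertices of degree `k` are never adjacent in a `k`-tree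
with at least `k + 2` vertices. The rest of `N(s)` is its neighbourhood in `G`, a `k`-clique
because vertices of degree `k` in a `k`-tree are simplicial; so `s` is a twig of `G⁺`.
-/

theorem Equiv.ncard_setOf_val_lt {W : Type*} {n m : ℕ} (e : W ≃ Fin n) (hm : m ≤ n) :
    {w | (e w : ℕ) < m}.ncard = m := by
  rw [show {w | (e w : ℕ) < m} = e ⁻¹' ↑({i : Fin n | (i : ℕ) < m} : Finset (Fin n)) by ext; simp,
    Set.ncard_preimage_of_injective_subset_range e.injective (by simp), Set.ncard_coe_finset,
    Fin.card_filter_val_lt, min_eq_right hm]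

theorem Equiv.ncard_setOf_val_le_sdiff_singleton {W : Type*} {n k : ℕ} (e : W ≃ Fin n)
    (hn : k + 1 ≤ n) {u : W} (hu : (e u : ℕ) ≤ k) : ({w | (e w : ℕ) ≤ k} \ {u}).ncard = k := by
  have hP : {w | (e w : ℕ) ≤ k} = {w | (e w : ℕ) < k + 1} := by simp_rw [Nat.lt_succ_iff]
  rw [Set.ncard_sdiff_singleton_of_mem (s := {w | (e w : ℕ) ≤ k}) hu, hP,
    e.ncard_setOf_val_lt hn, Nat.add_sub_cancel]

theorem Fintype.card_setOf_ne_add_one {V : Type*} [Fintype V] [DecidableEq V] (v : V) :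
    Fintype.card {x | x ≠ v} + 1 = Fintype.card V := by
  have := Fintype.card_pos_iff.2 ⟨v⟩
  simp only [Set.coe_ofPred, Fintype.card_subtype, Finset.filter_ne',
    Finset.card_erase_of_mem (Finset.mem_univ v), Finset.card_univ]
  omega

namespace SimpleGraph

variable {W : Type*} [Fintype W] {k : ℕ} {H : SimpleGraph W}

def IsKTreeOrder (k : ℕ) (H : SimpleGraph W) (e : W ≃ Fin (Fintype.card W)) : Prop :=
  ∀ v, H.IsClique {w | H.Adj v w ∧ e w < e v} ∧
    {w | H.Adj v w ∧ e w < e v}.ncard = min (e v : ℕ) k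

namespace IsKTreeOrder

variable {e : W ≃ Fin (Fintype.card W)} (he : H.IsKTreeOrder k e)
include he

theorem adj_of_lt {a b : W} (hb : (e b : ℕ) ≤ k) (hab : e a < e b) : H.Adj b a := by
  have hback : {w | H.Adj b w ∧ e w < e b} = {w | (e w : ℕ) < e b} :=
    Set.eq_of_subset_of_ncard_le (fun w hw => hw.2)
      (by rw [e.ncard_setOf_val_lt (e b).isLt.le, (he b).2]; omega)
  exact (hback.symm ▸ hab : a ∈ {w | H.Adj b w ∧ e w < e b}).1

theorem isClique_initial : H.IsClique {w | (e w : ℕ) ≤ k} := by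
  intro a ha b hb hne
  rcases lt_or_gt_of_ne (e.injective.ne hne) with h | h
  · exact (he.adj_of_lt hb h).symm
  · exact he.adj_of_lt ha h

theorem initial_sdiff_subset_neighborSet {u : W} (hu : (e u : ℕ) ≤ k) :
    {w | (e w : ℕ) ≤ k} \ {u} ⊆ H.neighborSet u :=
  fun _ ⟨hw, hwu⟩ => he.isClique_initial hu hw (Ne.symm hwu)

theorem neighborSet_eq_initial_sdiff (hn : k + 1 ≤ Fintype.card W) {u : W} (hu : (e u : ℕ) ≤ k)
    (hd : (H.neighborSet u).ncard = k) : H.neighborSet u = {w | (e w : ℕ) ≤ k} \ {u} :=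
  (Set.eq_of_subset_of_ncard_le (he.initial_sdiff_subset_neighborSet hu)
    (by rw [hd, e.ncard_setOf_val_le_sdiff_singleton hn hu])).symm

theorem neighborSet_eq_back {u : W} (hu : k < (e u : ℕ)) (hd : (H.neighborSet u).ncard = k) :
    H.neighborSet u = {w | H.Adj u w ∧ e w < e u} :=
  (Set.eq_of_subset_of_ncard_le (fun _ hw => hw.1) (by rw [hd, (he u).2]; omega)).symm

end IsKTreeOrder

namespace IsKTree

variable (hH : H.IsKTree k)
include hH

theorem add_two_le_card_of_not_adj {a b : W} (hab : a ≠ b) (h : ¬ H.Adj a b) :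
    k + 2 ≤ Fintype.card W := by
  obtain ⟨-, e, he : H.IsKTreeOrder k e⟩ := hH
  by_contra! hn
  have ha := (e a).isLt
  have hb := (e b).isLt
  exact h (he.isClique_initial (show (e a : ℕ) ≤ k by omega) (show (e b : ℕ) ≤ k by omega) hab)

theorem le_ncard_neighborSet (hn : k + 1 ≤ Fintype.card W) (u : W) :
    k ≤ (H.neighborSet u).ncard := by
  obtain ⟨-, e, he : H.IsKTreeOrder k e⟩ := hH
  rcases le_or_gt (e u : ℕ) k with hu | hu
  · rw [← e.ncard_setOf_val_le_sdiff_singleton hn hu]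
    exact Set.ncard_le_ncard (he.initial_sdiff_subset_neighborSet hu)
  · calc k = {w | H.Adj u w ∧ e w < e u}.ncard := by rw [(he u).2]; omega
      _ ≤ _ := Set.ncard_le_ncard fun _ hw => hw.1

theorem ncard_le_of_isClique {Q : Set W} (hQ : H.IsClique Q) : Q.ncard ≤ k + 1 := by
  obtain ⟨-, e, he : H.IsKTreeOrder k e⟩ := hH
  rcases Q.eq_empty_or_nonempty with rfl | hne
  · simp
  obtain ⟨q, hq, hmax⟩ := Q.exists_max_image e Q.toFinite hne
  have hsub : Q \ {q} ⊆ {w | H.Adj q w ∧ e w < e q} := fun w ⟨hw, hwq⟩ =>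
    ⟨hQ hq hw (Ne.symm hwq), (hmax w hw).lt_of_ne (e.injective.ne hwq)⟩
  have := Set.ncard_le_ncard hsub
  rw [Set.ncard_sdiff_singleton_of_mem hq, (he q).2] at this
  omega

theorem ncard_neighborSet_eq_of_isClique (hn : k + 1 ≤ Fintype.card W) {u : W}
    (hu : H.IsClique (H.neighborSet u)) : (H.neighborSet u).ncard = k := by
  have hle := hH.ncard_le_of_isClique (hu.insert fun _ hb _ => hb)
  rw [Set.ncard_insert_of_notMem (H.notMem_neighborSet_self (a := u))] at hle
  have := hH.le_ncard_neighborSet hn u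
  omega

theorem isClique_neighborSet (hn : k + 1 ≤ Fintype.card W) {u : W}
    (hd : (H.neighborSet u).ncard = k) : H.IsClique (H.neighborSet u) := by
  obtain ⟨-, e, he : H.IsKTreeOrder k e⟩ := hH
  rcases le_or_gt (e u : ℕ) k with hu | hu
  · rw [he.neighborSet_eq_initial_sdiff hn hu hd]
    exact he.isClique_initial.subset Set.sdiff_subset
  · rw [he.neighborSet_eq_back hu hd]
    exact (he u).1

theorem not_adj_of_ncard_eq (hk : 1 ≤ k) (hn : k + 2 ≤ Fintype.card W) {x y : W}
    (hx : (H.neighborSet x).ncard = k) (hy : (H.neighborSet y).ncard = k) : ¬ H.Adj x y := by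
  obtain ⟨-, e, he : H.IsKTreeOrder k e⟩ := hH
  intro hxy
  wlog hlt : e x < e y generalizing x y
  · exact this hy hx hxy.symm ((lt_or_gt_of_ne (e.injective.ne hxy.ne)).resolve_left hlt)
  have hn' : k + 1 ≤ Fintype.card W := by omega
  have hxP : (e x : ℕ) ≤ k := by
    by_contra! hgt
    exact hlt.not_gt ((he.neighborSet_eq_back hgt hx).subset hxy).2
  have hNx := he.neighborSet_eq_initial_sdiff hn' hxP hx
  have hyP : (e y : ℕ) ≤ k := (hNx.subset hxy).1
  have hNy := he.neighborSet_eq_initial_sdiff hn' hyP hy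
  -- The vertex `z` right after the initial clique is adjacent to neither `x` nor `y`,
  -- so it has fewer than `k` earlier neighbours.
  set z := e.symm ⟨k + 1, by omega⟩
  have hz : (e z : ℕ) = k + 1 := by simp [z]
  have hsub : {w | H.Adj z w ∧ e w < e z} ⊆ ({w | (e w : ℕ) ≤ k} \ {x}) \ {y} := by
    rintro w ⟨hzw, hw⟩
    have hw' : (e w : ℕ) ≤ k := by rw [Fin.lt_def] at hw; omega
    refine ⟨⟨hw', ?_⟩, ?_⟩
    · rintro rfl
      have : (e z : ℕ) ≤ k := (hNx.subset hzw.symm).1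
      omega
    · rintro rfl
      have : (e z : ℕ) ≤ k := (hNy.subset hzw.symm).1
      omega
  have := Set.ncard_le_ncard hsub
  rw [(he z).2, hz,
    Set.ncard_sdiff_singleton_of_mem (s := {w | (e w : ℕ) ≤ k} \ {x}) ⟨hyP, hxy.ne.symm⟩,
    e.ncard_setOf_val_le_sdiff_singleton hn' hxP] at this
  omega

end IsKTree

section DeleteVertex

variable {V : Type*} {G : SimpleGraph V} {v : V} {k : ℕ}

theorem exists_not_adj_of_ncard_add_one_lt [Finite V] {u : V}
    (h : (G.neighborSet u).ncard + 1 < Nat.card V) : ∃ w, w ≠ u ∧ ¬ G.Adj u w := by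
  by_contra! hall
  have huniv : insert u (G.neighborSet u) = Set.univ :=
    Set.eq_univ_of_forall fun w => (eq_or_ne w u).imp id (hall w)
  rw [← Set.ncard_univ, ← huniv, Set.ncard_insert_of_notMem (G.notMem_neighborSet_self (a := u))]
    at h
  exact h.false

theorem image_val_neighborSet_induce_ne (w : {x // x ≠ v}) :
    Subtype.val '' (G.induce {x | x ≠ v}).neighborSet w = G.neighborSet w \ {v} := by
  rw [neighborSet_induce, Subtype.image_preimage_coe]
  ext
  simp [and_comm]

theorem ncard_neighborSet_induce_ne_add_one [Finite V] (w : {x // x ≠ v}) (h : G.Adj w v) :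
    ((G.induce {x | x ≠ v}).neighborSet w).ncard + 1 = (G.neighborSet w).ncard := by
  rw [← Set.ncard_image_of_injective _ Subtype.val_injective, image_val_neighborSet_induce_ne,
    Set.ncard_sdiff_singleton_add_one (s := G.neighborSet w) h]

theorem ncard_neighborSet_induce_ne [Finite V] (w : {x // x ≠ v}) (h : ¬ G.Adj w v) :
    ((G.induce {x | x ≠ v}).neighborSet w).ncard = (G.neighborSet w).ncard := by
  rw [← Set.ncard_image_of_injective _ Subtype.val_injective, image_val_neighborSet_induce_ne,
    Set.sdiff_singleton_eq_self (s := G.neighborSet w) h]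

theorem mem_bud_iff_of_ne [Finite V]
    (hmin : ∀ w : {x // x ≠ v}, k ≤ ((G.induce {x | x ≠ v}).neighborSet w).ncard)
    {w u : {x // x ≠ v}} :
    (u : V) ∈ G.bud k w ↔ u ∈ (G.induce {x | x ≠ v}).bud k w ∧ ¬ G.Adj u v := by
  by_cases huv : G.Adj u v
  · have h1 := ncard_neighborSet_induce_ne_add_one u huv
    have h2 := hmin u
    simp only [huv, not_true_eq_false, and_false, iff_false]
    exact fun hu => by have : (G.neighborSet u).ncard = k := hu.2; omega
  · rw [and_iff_left huv]
    show _ ∧ _ = k ↔ _ ∧ _ = k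
    rw [ncard_neighborSet_induce_ne u huv]
    exact Iff.rfl

theorem IsTwig.of_induce_ne [Finite V] (hv : (G.neighborSet v).ncard = k)
    (hmin : ∀ w : {x // x ≠ v}, k ≤ ((G.induce {x | x ≠ v}).neighborSet w).ncard)
    {t : {x // x ≠ v}} (ht : (G.induce {x | x ≠ v}).IsTwig k t)
    (hbud : ∀ s ∈ (G.induce {x | x ≠ v}).bud k t, ¬ G.Adj s v) : G.IsTwig k t := by
  obtain ⟨⟨w, hwt, hw⟩, ⟨s, hs⟩, hclique, hcard⟩ := ht
  have hcore : G.neighborSet t \ G.bud k t = Subtype.val ''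
      ((G.induce {x | x ≠ v}).neighborSet t \ (G.induce {x | x ≠ v}).bud k t) := by
    ext u
    constructor
    · rintro ⟨htu, hu⟩
      have huv : u ≠ v := by
        rintro rfl
        exact hu ⟨htu, hv⟩
      exact ⟨⟨u, huv⟩, ⟨htu, fun hub => hu ((mem_bud_iff_of_ne hmin).2 ⟨hub, hbud _ hub⟩)⟩, rfl⟩
    · rintro ⟨u, ⟨htu, hu⟩, rfl⟩
      exact ⟨htu, fun hub => hu ((mem_bud_iff_of_ne hmin).1 hub).1⟩
  refine ⟨⟨w, Subtype.coe_ne_coe.2 hwt, hw⟩, ⟨s, (mem_bud_iff_of_ne hmin).2 ⟨hs, hbud s hs⟩⟩,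
    ?_, ?_⟩
  · rw [hcore]
    exact isClique_induce_iff.1 hclique
  · rw [hcore, Set.ncard_image_of_injective _ Subtype.val_injective, hcard]

theorem isTwig_of_adj_of_ncard_induce_ne_eq [Fintype V] [DecidableEq V] (hk : 1 ≤ k)
    (hv : (G.neighborSet v).ncard = k) (hG : (G.induce {x | x ≠ v}).IsKTree k)
    (hn : k + 2 ≤ Fintype.card {x | x ≠ v}) {s : {x // x ≠ v}}
    (hs : ((G.induce {x | x ≠ v}).neighborSet s).ncard = k) (hsv : G.Adj s v) :
    G.IsTwig k s := by
  have hmin := hG.le_ncard_neighborSet (by omega)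
  have hbud : G.bud k s = {v} := by
    ext u
    constructor
    · intro hu
      by_contra huv
      obtain ⟨⟨hsu, hu⟩, -⟩ := (mem_bud_iff_of_ne hmin (u := ⟨u, huv⟩)).1 hu
      exact hG.not_adj_of_ncard_eq hk hn hs hu hsu
    · rintro rfl
      exact ⟨hsv, hv⟩
  have hcore :
      G.neighborSet s \ G.bud k s = Subtype.val '' (G.induce {x | x ≠ v}).neighborSet s := by
    rw [hbud, image_val_neighborSet_induce_ne]
  refine ⟨exists_not_adj_of_ncard_add_one_lt ?_, ⟨v, hbud ▸ rfl⟩, ?_, ?_⟩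
  · rw [Nat.card_eq_fintype_card, ← ncard_neighborSet_induce_ne_add_one s hsv, hs,
      ← Fintype.card_setOf_ne_add_one v]
    omega
  · rw [hcore]
    exact isClique_induce_iff.1 (hG.isClique_neighborSet (by omega) hs)
  · rw [hcore, Set.ncard_image_of_injective _ Subtype.val_injective, hs]

end DeleteVertex

end SimpleGraph

theorem twig_bud_twig {V : Type*} [Fintype V] [DecidableEq V] (k : ℕ) (hk : 1 ≤ k)
    (Gp : SimpleGraph V) (v : V) (hsimp : Gp.IsClique (Gp.neighborSet v))
    (hGp : Gp.IsKTree k) (hG : (Gp.induce {x : V | x ≠ v}).IsKTree k)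
    (t : {x : V // x ≠ v})
    (ht : (Gp.induce {x : V | x ≠ v}).IsTwig k t) (ht' : ¬ Gp.IsTwig k (t : V)) :
    ∃ s ∈ (Gp.induce {x : V | x ≠ v}).bud k t, Gp.IsTwig k (s : V) := by
  obtain ⟨w, hwt, htw⟩ := ht.1
  have hn : k + 2 ≤ Fintype.card {x | x ≠ v} := hG.add_two_le_card_of_not_adj hwt.symm htw
  have hv : (Gp.neighborSet v).ncard = k := by
    have := Fintype.card_setOf_ne_add_one v
    exact hGp.ncard_neighborSet_eq_of_isClique (by omega) hsimp
  obtain ⟨s, hs, hsv⟩ : ∃ s ∈ (Gp.induce {x : V | x ≠ v}).bud k t, Gp.Adj s v := by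
    by_contra! hbud
    exact ht' (ht.of_induce_ne hv (hG.le_ncard_neighborSet (by omega)) hbud)
  exact ⟨s, hs, isTwig_of_adj_of_ncard_induce_ne_eq hk hv hG hn hs.2 hsv⟩
end

section
/- The square of a k-connected graph is k-tough. -/
open SimpleGraph

/-!
Let `X` be a cut of `G²` and, for each component `K` of `G² - X`, let `A(K)` be the set of
vertices of `X` adjacent in `G` to `K`. A `G`-path leaving `K` must first pass through `A(K)`,
so `A(K)` separates `G` as soon as `G² - X` has a second component, and hence `|A(K)| ≥ k`.
A vertex of `X` adjacent to two components would put them at distance two in `G`, i.e.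
adjacent in `G²`; so the sets `A(K)` are pairwise disjoint subsets of `X`, and summing gives
`k · c(G² - X) ≤ |X|`.
-/

open scoped Function in
lemma Set.mul_card_le_ncard_of_pairwise_disjoint {ι α : Type*} [Finite ι] {s : Set α}
    (hs : s.Finite) {t : ι → Set α} (hts : ∀ i, t i ⊆ s) (hdisj : Pairwise (Disjoint on t))
    {k : ℕ} (hk : ∀ i, k ≤ (t i).ncard) : k * Nat.card ι ≤ s.ncard := by
  cases nonempty_fintype ι
  calc k * Nat.card ι = ∑ _ : ι, k := by simp [mul_comm]
    _ ≤ ∑ i, (t i).ncard := Finset.sum_le_sum fun i _ => hk i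
    _ = (⋃ i, t i).ncard := by
      rw [Set.ncard_iUnion_of_finite (fun i => hs.subset (hts i)) hdisj, finsum_eq_sum_of_fintype]
    _ ≤ s.ncard := Set.ncard_le_ncard (Set.iUnion_subset hts) hs

namespace SimpleGraph

variable {V : Type*} {G G' : SimpleGraph V} {X : Set V}

lemma le_square (G : SimpleGraph V) : G ≤ G.square := fun _ _ h => ⟨h.ne, Or.inl h⟩

lemma square_adj_of_adj_of_adj {u x v : V} (hux : G.Adj u x) (hxv : G.Adj x v) (huv : u ≠ v) :
    G.square.Adj u v :=
  ⟨huv, Or.inr ⟨x, hux, hxv⟩⟩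

def attachments (G : SimpleGraph V) {G' : SimpleGraph V} {X : Set V}
    (K : (G'.induce Xᶜ).ConnectedComponent) : Set V :=
  {x | x ∈ X ∧ ∃ u ∈ K.supp, G.Adj x u}

lemma attachments_subset (K : (G'.induce Xᶜ).ConnectedComponent) : G.attachments K ⊆ X :=
  fun _ hx => hx.1

lemma not_preconnected_induce_compl_attachments (hle : G ≤ G')
    {K K' : (G'.induce Xᶜ).ConnectedComponent} (hne : K ≠ K') :
    ¬ (G.induce (G.attachments K)ᶜ).Preconnected := by
  intro hconn
  obtain ⟨u, hu⟩ := K.exists_rep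
  obtain ⟨v, hv⟩ := K'.exists_rep
  let inK : Set ↥(G.attachments K)ᶜ :=
    {w | ∃ hw : w.1 ∉ X, (G'.induce Xᶜ).connectedComponentMk ⟨w.1, hw⟩ = K}
  obtain ⟨p⟩ := hconn ⟨u, fun h => u.2 h.1⟩ ⟨v, fun h => v.2 h.1⟩
  obtain ⟨d, -, ⟨hfstX, hfst⟩, hsnd⟩ :=
    p.exists_boundary_dart inK ⟨u.2, hu⟩ fun ⟨_, h⟩ => hne (h.symm.trans hv)
  have hsndX : d.snd.1 ∉ X := fun hX =>
    d.snd.2 ⟨hX, ⟨d.fst.1, hfstX⟩, (K.mem_supp_iff _).mpr hfst, d.adj.symm⟩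
  have hadj : (G'.induce Xᶜ).Adj ⟨_, hfstX⟩ ⟨_, hsndX⟩ := hle d.adj
  exact hsnd ⟨hsndX, (ConnectedComponent.connectedComponentMk_eq_of_adj hadj).symm.trans hfst⟩

lemma IsKConnected.le_ncard_attachments {k : ℕ} [Fintype V] (hG : G.IsKConnected k)
    (hle : G ≤ G') [Nontrivial (G'.induce Xᶜ).ConnectedComponent]
    (K : (G'.induce Xᶜ).ConnectedComponent) : k ≤ (G.attachments K).ncard := by
  by_contra! hlt
  obtain ⟨K', hne⟩ := exists_ne K
  exact not_preconnected_induce_compl_attachments hle hne.symm (hG.2 _ hlt).preconnected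

open scoped Function in
lemma pairwise_disjoint_attachments_square :
    Pairwise (Disjoint on fun K : (G.square.induce Xᶜ).ConnectedComponent => G.attachments K) := by
  intro K₁ K₂ hne
  rw [Function.onFun, Set.disjoint_left]
  rintro x ⟨-, u, hu, hxu⟩ ⟨-, v, hv, hxv⟩
  rw [ConnectedComponent.mem_supp_iff] at hu hv
  apply hne
  rw [← hu, ← hv]
  by_cases huv : u = v
  · rw [huv]
  · exact ConnectedComponent.connectedComponentMk_eq_of_adj
      (square_adj_of_adj_of_adj hxu.symm hxv (Subtype.coe_ne_coe.mpr huv))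

end SimpleGraph

theorem square_of_kconnected_is_ktough {V : Type*} [Fintype V] (k : ℕ)
    (G : SimpleGraph V) (hG : G.IsKConnected k) :
    G.square.ToughGE (k : ℝ) := by
  intro X hX
  have : Nontrivial (G.square.induce Xᶜ).ConnectedComponent :=
    Finite.one_lt_card_iff_nontrivial.mp hX
  have hcount : k * Nat.card (G.square.induce Xᶜ).ConnectedComponent ≤ X.ncard :=
    Set.mul_card_le_ncard_of_pairwise_disjoint X.toFinite (fun K => attachments_subset K)
      pairwise_disjoint_attachments_square (hG.le_ncard_attachments G.le_square)
  exact_mod_cast hcount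
end

section
/- The square of a tree is a chordal graph. -/
open SimpleGraph

/-!
Root the tree at a vertex `r` and call the neighbour of `u ≠ r` closer to `r` its parent.
A `T²`-neighbour of `u` that is no farther from `r` than `u` is either the parent of `u` or
a tree neighbour of it (going through a child of `u` would force a second parent on that
child), so these neighbours form a clique in `T²`. On a cycle of `T²`, the two cycle
neighbours of a vertex farthest from `r` are therefore adjacent, and when the cycle has
length at least 4 this edge is a chord.
-/

namespace SimpleGraph

variable {V : Type*} {G : SimpleGraph V}

lemma isClique_square_insert_neighborSet (p : V) :
    G.square.IsClique (insert p (G.neighborSet p)) := by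
  rintro x (rfl | hx) y (rfl | hy) hxy
  · exact absurd rfl hxy
  · exact ⟨hxy, Or.inl hy⟩
  · exact ⟨hxy, Or.inl (G.adj_symm hx)⟩
  · exact ⟨hxy, Or.inr ⟨p, G.adj_symm hx, hy⟩⟩

namespace Walk

lemma IsCycle.snd_penultimate_notMem_edges {u : V} {c : G.Walk u u} (hc : c.IsCycle)
    (hlen : 4 ≤ c.length) : s(c.snd, c.penultimate) ∉ c.edges := by
  have hnil := hc.not_nil
  have hsnd := (c.adj_snd hnil).ne
  have hpen := (c.adj_penultimate hnil).ne
  have hedges : c.edges = s(u, c.snd) :: c.tail.edges := by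
    cases c with
    | nil => exact absurd .nil hnil
    | cons _ _ => simp
  rw [hedges, List.mem_cons, Sym2.eq_iff]
  rintro ((⟨h, -⟩ | ⟨-, h⟩) | hmem)
  · exact hsnd h.symm
  · exact hpen h
  · have h := hc.isPath_tail.eq_snd_of_mem_edges hmem
    rw [snd, getVert_tail] at h
    have := hc.getVert_injOn ⟨by omega, by omega⟩ ⟨by omega, by omega⟩ h
    omega

lemma IsCycle.exists_chord_of_isClique {v u : V} {c : G.Walk v v} (hc : c.IsCycle)
    (hlen : 4 ≤ c.length) (hu : u ∈ c.support)
    (hclique : G.IsClique (G.neighborSet u ∩ {w | w ∈ c.support})) :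
    ∃ x y, x ∈ c.support ∧ y ∈ c.support ∧ G.Adj x y ∧ s(x, y) ∉ c.edges := by
  classical
  set c' := c.rotate u hu
  have hc' : c'.IsCycle := hc.rotate hu
  have hnil : ¬ c'.Nil := hc'.not_nil
  have hmem (i : ℕ) : c'.getVert i ∈ c.support :=
    (c.mem_support_rotate_iff u hu).mp (c'.getVert_mem_support i)
  refine ⟨c'.snd, c'.penultimate, hmem 1, hmem _, ?_, ?_⟩
  · exact hclique ⟨c'.adj_snd hnil, hmem 1⟩ ⟨(c'.adj_penultimate hnil).symm, hmem _⟩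
      hc'.snd_ne_penultimate
  · rw [← (c.rotate_edges u hu).perm.mem_iff]
    exact hc'.snd_penultimate_notMem_edges (by simpa [c'] using hlen)

end Walk

namespace IsTree

variable (r : V)

lemma penultimate_eq_of_adj_of_dist_add_one_eq (hG : G.IsTree) {u a : V} {q : G.Walk r u}
    (hq : q.IsPath) (ha : G.Adj a u) (hd : G.dist r a + 1 = G.dist r u) :
    q.penultimate = a := by
  classical
  obtain ⟨p, hp, hplen⟩ := hG.connected.exists_path_of_dist r a
  have hu : u ∉ p.support := fun hu => by
    have := dist_le (p.takeUntil u hu)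
    have := p.length_takeUntil_le_length hu
    omega
  rw [(hG.existsUnique_path r u).unique hq (hp.concat hu ha), Walk.penultimate_concat]

lemma eq_of_adj_of_dist_add_one_eq (hG : G.IsTree) {u a b : V} (ha : G.Adj u a)
    (hb : G.Adj u b) (hda : G.dist r a + 1 = G.dist r u) (hdb : G.dist r b + 1 = G.dist r u) :
    a = b := by
  obtain ⟨q, hq, -⟩ := hG.connected.exists_path_of_dist r u
  rw [← hG.penultimate_eq_of_adj_of_dist_add_one_eq r hq ha.symm hda,
    hG.penultimate_eq_of_adj_of_dist_add_one_eq r hq hb.symm hdb]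

lemma exists_parent_of_square_adj (hG : G.IsTree) {u w : V} (h : G.square.Adj u w)
    (hw : G.dist r w ≤ G.dist r u) :
    ∃ p, G.Adj u p ∧ G.dist r p + 1 = G.dist r u ∧ (w = p ∨ G.Adj p w) := by
  obtain ⟨hne, huw | ⟨m, hum, hmw⟩⟩ := h
  · obtain h | h := hG.dist_eq_dist_add_one_of_adj r huw
    · exact ⟨w, huw, h.symm, Or.inl rfl⟩
    · omega
  · obtain h | h := hG.dist_eq_dist_add_one_of_adj r hum
    · exact ⟨m, hum, h.symm, Or.inr hmw⟩
    · obtain h' | h' := hG.dist_eq_dist_add_one_of_adj r hmw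
      · exact absurd (hG.eq_of_adj_of_dist_add_one_eq r hmw hum.symm h'.symm h.symm) hne.symm
      · omega

lemma isClique_square_neighborSet_inter_dist_le (hG : G.IsTree) (u : V) :
    G.square.IsClique (G.square.neighborSet u ∩ {w | G.dist r w ≤ G.dist r u}) := by
  rintro x ⟨hx, hxr⟩ y ⟨hy, hyr⟩ hxy
  obtain ⟨p, hup, hp, hpx⟩ := hG.exists_parent_of_square_adj r hx hxr
  obtain ⟨p', hup', hp', hpy⟩ := hG.exists_parent_of_square_adj r hy hyr
  obtain rfl := hG.eq_of_adj_of_dist_add_one_eq r hup hup' hp hp'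
  exact isClique_square_insert_neighborSet p hpx hpy hxy

end IsTree

end SimpleGraph

theorem square_of_tree_chordal {V : Type*} (T : SimpleGraph V) (hT : T.IsTree) :
    T.square.IsChordal := by
  classical
  intro v c hc hlen
  obtain ⟨u, hu, hmax⟩ := c.support.toFinset.exists_max_image (T.dist v)
    ⟨v, List.mem_toFinset.mpr c.start_mem_support⟩
  refine hc.exists_chord_of_isClique hlen (List.mem_toFinset.mp hu)
    ((hT.isClique_square_neighborSet_inter_dist_le v u).subset ?_)
  rintro w ⟨hw, hwc⟩
  exact ⟨hw, hmax w (List.mem_toFinset.mpr hwc)⟩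
end

section
/- For i = 1,2 let G_i⁺ and G_i be t-tough graphs such that G_i = G_i⁺ − v_i for a vertex v_i of G_i⁺. Let U be obtained from the disjoint union of G_1 and G_2 by adding edges between them so that in the bipartite graph between N(v_1) (in G_1⁺) and N(v_2) (in G_2⁺) formed by the new edges, every vertex has degree at least t. Then U is t-tough. -/
/-!
Let `X` be a cut of `U` and `Xᵢ` its trace on `Gᵢ`. Since `U - X` is covered by `G₁ - X₁` and
`G₂ - X₂`, it has at most `ω(G₁ - X₁) + ω(G₂ - X₂)` components, and one fewer if an added edge
survives. The toughness of `Gᵢ` pays for `ω(Gᵢ - Xᵢ)` except when that number is `1`, where it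
leaves a debt of `t`. If `X₁ ⊇ N(v₁)`, then `v₁` is an extra component of `G₁⁺ - X₁`, and the
toughness of `G₁⁺` pays the debt of the other side; likewise if `X₂ ⊇ N(v₂)`. Otherwise some
`x ∈ N(v₁)` and `y ∈ N(v₂)` survive. Either an added edge survives, and the lost component pays
the debt, or `X` contains the at least `t` added neighbours of `x` and of `y`, so `|Xᵢ| ≥ t`
and there is no debt.
-/

open SimpleGraph

/-- The graph obtained from the disjoint union of `G₁` and `G₂` by adding the edges
prescribed by the relation `R`. -/
def glueGraph {A B : Type*} (G₁ : SimpleGraph A) (G₂ : SimpleGraph B) (R : A → B → Prop) :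
    SimpleGraph (A ⊕ B) where
  Adj a b := match a, b with
    | Sum.inl x, Sum.inl y => G₁.Adj x y
    | Sum.inr x, Sum.inr y => G₂.Adj x y
    | Sum.inl x, Sum.inr y => R x y
    | Sum.inr x, Sum.inl y => R y x
  symm := by
    constructor
    rintro (x | x) (y | y) h <;> simp only at h ⊢ <;>
      first | exact G₁.adj_symm h | exact G₂.adj_symm h | exact h
  loopless := by
    constructor
    rintro (x | x) h <;> simp only at h <;>
      first | exact G₁.irrefl h | exact G₂.irrefl h

namespace SimpleGraph

variable {V W W₁ W₂ : Type*}

section ConnectedComponents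

variable {H : SimpleGraph W} {H₁ : SimpleGraph W₁} {H₂ : SimpleGraph W₂}

theorem card_connectedComponent_add_one_le_of_isIsolated [Finite W] (f : H₁ ↪g H) {w : W}
    (hw : H.IsIsolated w) (hf : Set.range f = {w}ᶜ) :
    Nat.card H₁.ConnectedComponent + 1 ≤ Nat.card H.ConnectedComponent := by
  have hfw (a : W₁) : f a ≠ w := by
    have : f a ∈ Set.range f := ⟨a, rfl⟩
    rwa [hf] at this
  -- A walk between vertices of the range never passes through the isolated vertex `w`.
  have reflect {u u' : W} (p : H.Walk u u') :
      ∀ a b, f a = u → f b = u' → H₁.Reachable a b := by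
    induction p with
    | nil => rintro a b rfl hb; rw [f.injective hb]
    | @cons u m u' hum p ih =>
      rintro a b rfl hb
      have hm : m ∈ Set.range f := hf ▸ fun hmw => hw _ (hmw ▸ hum).symm
      obtain ⟨a', rfl⟩ := hm
      exact (f.map_adj_iff.1 hum).reachable.trans (ih a' b rfl hb)
  let φ : Option H₁.ConnectedComponent → H.ConnectedComponent :=
    fun o => o.elim (H.connectedComponentMk w) (·.map f.toHom)
  have hφ : φ.Injective := by
    rintro (_ | k) (_ | k') h
    · rfl
    · induction k' using ConnectedComponent.ind with | _ b =>
      exact absurd (ConnectedComponent.exact h)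
        (not_reachable_of_neighborSet_left_eq_empty (hfw b).symm (H.neighborSet_eq_empty.2 hw))
    · induction k using ConnectedComponent.ind with | _ a =>
      exact absurd (ConnectedComponent.exact h)
        (not_reachable_of_neighborSet_right_eq_empty (hfw a) (H.neighborSet_eq_empty.2 hw))
    · induction k using ConnectedComponent.ind with | _ a =>
      induction k' using ConnectedComponent.ind with | _ b =>
      obtain ⟨p⟩ := ConnectedComponent.exact h
      exact congrArg some (ConnectedComponent.sound (reflect p a b rfl rfl))
  have := Finite.of_injective f f.injective
  rw [← Finite.card_option]
  exact Nat.card_le_card_of_injective φ hφ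

theorem ConnectedComponent.surjective_sumElim_map (f : H₁ →g H) (g : H₂ →g H)
    (hfg : (Sum.elim f g).Surjective) :
    (Sum.elim (ConnectedComponent.map f) (ConnectedComponent.map g)).Surjective := by
  refine ConnectedComponent.ind fun w => ?_
  obtain ⟨a | b, rfl⟩ := hfg w
  · exact ⟨.inl (H₁.connectedComponentMk a), rfl⟩
  · exact ⟨.inr (H₂.connectedComponentMk b), rfl⟩

theorem card_connectedComponent_le_add [Finite W₁] [Finite W₂] (f : H₁ →g H) (g : H₂ →g H)
    (hfg : (Sum.elim f g).Surjective) :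
    Nat.card H.ConnectedComponent ≤
      Nat.card H₁.ConnectedComponent + Nat.card H₂.ConnectedComponent := by
  rw [← Nat.card_sum]
  exact Nat.card_le_card_of_surjective _ (ConnectedComponent.surjective_sumElim_map f g hfg)

theorem card_connectedComponent_add_one_le_add [Finite W₁] [Finite W₂] (f : H₁ →g H)
    (g : H₂ →g H) (hfg : (Sum.elim f g).Surjective) {a : W₁} {b : W₂}
    (hab : H.Reachable (f a) (g b)) :
    Nat.card H.ConnectedComponent + 1 ≤
      Nat.card H₁.ConnectedComponent + Nat.card H₂.ConnectedComponent := by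
  set ψ := Sum.elim (ConnectedComponent.map f) (ConnectedComponent.map g)
  set b' : H₁.ConnectedComponent ⊕ H₂.ConnectedComponent := .inr (H₂.connectedComponentMk b)
  -- `ψ` identifies the components of `a` and `b`, so it remains onto without the latter.
  have hψ : Function.Surjective fun z : {z // z ≠ b'} => ψ z := by
    intro γ
    obtain ⟨z, rfl⟩ := ConnectedComponent.surjective_sumElim_map f g hfg γ
    by_cases hz : z = b'
    · subst hz
      exact ⟨⟨.inl (H₁.connectedComponentMk a), nofun⟩, ConnectedComponent.sound hab⟩
    · exact ⟨⟨z, hz⟩, rfl⟩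
  calc Nat.card H.ConnectedComponent + 1 ≤ Nat.card {z // z ≠ b'} + 1 := by
        gcongr; exact Nat.card_le_card_of_surjective _ hψ
    _ ≤ Nat.card (H₁.ConnectedComponent ⊕ H₂.ConnectedComponent) :=
        Finite.card_subtype_lt (x := b') (by simp)
    _ = _ := Nat.card_sum

end ConnectedComponents

/-- `ω(G - X)`, the number of connected components of `G - X`. -/
noncomputable def compCount (G : SimpleGraph V) (X : Set V) : ℕ :=
  Nat.card (G.induce Xᶜ).ConnectedComponent

theorem compCount_induce_ne_add_one_le [Finite V] (G : SimpleGraph V) {v : V}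
    {Y : Set {x // x ≠ v}} (hY : {x : {x // x ≠ v} | G.Adj v x} ⊆ Y) :
    (G.induce {x | x ≠ v}).compCount Y + 1 ≤ G.compCount (Subtype.val '' Y) := by
  let f : (G.induce {x | x ≠ v}).induce Yᶜ ↪g G.induce (Subtype.val '' Y)ᶜ :=
    { toFun := fun a => ⟨a.1.1, fun ⟨b, hb, hba⟩ => a.2 (Subtype.ext hba ▸ hb)⟩
      inj' := fun a b h =>
        Subtype.ext <| Subtype.ext <| congrArg (fun u : ↥(Subtype.val '' Y)ᶜ => u.1) h
      map_rel_iff' := Iff.rfl }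
  have hv : v ∉ Subtype.val '' Y := fun ⟨b, _, hb⟩ => b.2 hb
  refine card_connectedComponent_add_one_le_of_isIsolated f (w := ⟨v, hv⟩) ?_ ?_
  · intro u hu
    exact u.2 ⟨⟨u, (G.ne_of_adj hu).symm⟩, hY hu, rfl⟩
  · ext u
    refine ⟨?_, fun hu => ?_⟩
    · rintro ⟨a, rfl⟩ h
      exact a.1.2 (congrArg Subtype.val h)
    · have hu' : u.1 ≠ v := fun h => hu (Subtype.ext h)
      exact ⟨⟨⟨u, hu'⟩, fun h => u.2 ⟨_, h, rfl⟩⟩, rfl⟩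

variable [Fintype V] {G : SimpleGraph V} {t : ℝ}

theorem toughGE_of_nonpos (G : SimpleGraph V) (ht : t ≤ 0) : G.ToughGE t := fun _ _ =>
  (mul_nonpos_of_nonpos_of_nonneg ht (Nat.cast_nonneg _)).trans (Nat.cast_nonneg _)

theorem ToughGE.mul_compCount_le (h : G.ToughGE t) {X : Set V} (hX : 1 < G.compCount X) :
    t * G.compCount X ≤ X.ncard :=
  h X hX

theorem ToughGE.mul_compCount_le_max (h : G.ToughGE t) (ht : 0 ≤ t) (X : Set V) :
    t * G.compCount X ≤ max (X.ncard : ℝ) t := by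
  rcases lt_or_ge 1 (G.compCount X) with hX | hX
  · exact (h.mul_compCount_le hX).trans (le_max_left _ _)
  · exact (mul_le_of_le_one_right ht (by exact_mod_cast hX)).trans (le_max_right _ _)

-- Once all neighbours of `v` are deleted, `v` is an extra component of `G - Y`.
theorem ToughGE.mul_compCount_induce_ne_add_one_le (h : G.ToughGE t) (ht : 0 ≤ t) {v : V}
    {Y : Set {x // x ≠ v}} (hY : {x : {x // x ≠ v} | G.Adj v x} ⊆ Y)
    (hc : 0 < (G.induce {x | x ≠ v}).compCount Y) :
    t * ((G.induce {x | x ≠ v}).compCount Y + 1 : ℝ) ≤ Y.ncard := by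
  have hle := G.compCount_induce_ne_add_one_le hY
  calc t * ((G.induce {x | x ≠ v}).compCount Y + 1 : ℝ)
      ≤ t * G.compCount (Subtype.val '' Y) := by gcongr; exact_mod_cast hle
    _ ≤ (Subtype.val '' Y).ncard := h.mul_compCount_le (by omega)
    _ = Y.ncard := by rw [Set.ncard_image_of_injective _ Subtype.val_injective]

theorem ToughGE.mul_compCount_le_ncard_add (h : G.ToughGE t) (ht : 0 ≤ t) (X : Set V) :
    t * G.compCount X ≤ X.ncard + t :=
  (h.mul_compCount_le_max ht X).trans (max_le_add_of_nonneg (Nat.cast_nonneg _) ht)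

theorem ToughGE.mul_compCount_le_of_le_ncard (h : G.ToughGE t) (ht : 0 ≤ t) {X : Set V}
    (hX : t ≤ X.ncard) : t * G.compCount X ≤ X.ncard :=
  (h.mul_compCount_le_max ht X).trans (max_le le_rfl hX)

theorem ToughGE.mul_le_ncard_add_of_le_add_compCount (h : G.ToughGE t) (ht : 0 ≤ t) (X : Set V)
    {c c' n : ℕ} (hc : 1 < c) (hcc : c ≤ c' + G.compCount X)
    (hn : 0 < c' → t * (c' + 1 : ℝ) ≤ n) : t * c ≤ n + X.ncard := by
  rcases Nat.eq_zero_or_pos c' with rfl | hc'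
  · rw [zero_add] at hcc
    calc t * c ≤ t * G.compCount X := by gcongr
      _ ≤ X.ncard := h.mul_compCount_le (by omega)
      _ ≤ n + X.ncard := le_add_of_nonneg_left (Nat.cast_nonneg _)
  · have hX := h.mul_compCount_le_ncard_add ht X
    calc t * c ≤ t * (c' + G.compCount X : ℝ) := by gcongr; exact_mod_cast hcc
      _ = t * (c' + 1 : ℝ) + t * G.compCount X - t := by ring
      _ ≤ n + X.ncard := by linarith [hn hc']

theorem ToughGE.mul_le_ncard_add_of_add_one_le {V₁ V₂ : Type*} [Fintype V₁] [Fintype V₂]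
    {G₁ : SimpleGraph V₁} {G₂ : SimpleGraph V₂} (h₁ : G₁.ToughGE t) (h₂ : G₂.ToughGE t)
    (ht : 0 ≤ t) {X₁ : Set V₁} {X₂ : Set V₂} {c : ℕ} (hc : 1 < c)
    (hcc : c + 1 ≤ G₁.compCount X₁ + G₂.compCount X₂) : t * c ≤ X₁.ncard + X₂.ncard := by
  have hsum : t * G₁.compCount X₁ + t * G₂.compCount X₂ ≤ X₁.ncard + X₂.ncard + t := by
    rcases lt_or_ge 1 (G₁.compCount X₁) with hc₁ | hc₁
    · linarith [h₁.mul_compCount_le hc₁, h₂.mul_compCount_le_ncard_add ht X₂]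
    · linarith [h₁.mul_compCount_le_ncard_add ht X₁, h₂.mul_compCount_le (X := X₂) (by omega)]
  have : t * (c + 1 : ℝ) ≤ t * (G₁.compCount X₁ + G₂.compCount X₂ : ℝ) :=
    mul_le_mul_of_nonneg_left (by exact_mod_cast hcc) ht
  linarith

end SimpleGraph

theorem Set.ncard_eq_ncard_preimage_inl_add {α β : Type*} [Finite α] [Finite β]
    (s : Set (α ⊕ β)) : s.ncard = (Sum.inl ⁻¹' s).ncard + (Sum.inr ⁻¹' s).ncard := by
  conv_lhs => rw [← Set.image_preimage_inl_union_image_preimage_inr s]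
  rw [Set.ncard_union_eq Set.disjoint_image_inl_image_inr,
    Set.ncard_image_of_injective _ Sum.inl_injective,
    Set.ncard_image_of_injective _ Sum.inr_injective]

namespace glueGraph

variable {A B : Type*} (G₁ : SimpleGraph A) (G₂ : SimpleGraph B) (R : A → B → Prop)
  (X : Set (A ⊕ B))

def inlHom : G₁.induce (Sum.inl ⁻¹' X)ᶜ →g (glueGraph G₁ G₂ R).induce Xᶜ where
  toFun a := ⟨.inl a, a.2⟩
  map_rel' h := h

def inrHom : G₂.induce (Sum.inr ⁻¹' X)ᶜ →g (glueGraph G₁ G₂ R).induce Xᶜ where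
  toFun b := ⟨.inr b, b.2⟩
  map_rel' h := h

theorem surjective_sumElim_inlHom_inrHom :
    (Sum.elim (inlHom G₁ G₂ R X) (inrHom G₁ G₂ R X)).Surjective := by
  rintro ⟨a | b, h⟩
  · exact ⟨.inl ⟨a, h⟩, rfl⟩
  · exact ⟨.inr ⟨b, h⟩, rfl⟩

variable {G₁ G₂ R} [Finite A] [Finite B]

theorem compCount_le :
    (glueGraph G₁ G₂ R).compCount X ≤
      G₁.compCount (Sum.inl ⁻¹' X) + G₂.compCount (Sum.inr ⁻¹' X) :=
  card_connectedComponent_le_add _ _ (surjective_sumElim_inlHom_inrHom G₁ G₂ R X)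

theorem compCount_add_one_le {X : Set (A ⊕ B)} {a : A} {b : B} (hab : R a b)
    (ha : .inl a ∉ X) (hb : .inr b ∉ X) :
    (glueGraph G₁ G₂ R).compCount X + 1 ≤
      G₁.compCount (Sum.inl ⁻¹' X) + G₂.compCount (Sum.inr ⁻¹' X) :=
  card_connectedComponent_add_one_le_add (inlHom G₁ G₂ R X) (inrHom G₁ G₂ R X)
    (surjective_sumElim_inlHom_inrHom G₁ G₂ R X) (a := ⟨a, ha⟩) (b := ⟨b, hb⟩)
    (Adj.reachable hab)

end glueGraph

namespace SimpleGraph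

variable {A B : Type*} [Fintype A] [Fintype B] {G₁ : SimpleGraph A} {G₂ : SimpleGraph B}
  {R : A → B → Prop} {t : ℝ}

-- `hNᵢ` is what the toughness of `Gᵢ` with an added vertex of neighbourhood `Nᵢ` provides.
theorem ToughGE.glueGraph (h₁ : G₁.ToughGE t) (h₂ : G₂.ToughGE t) (ht : 0 ≤ t)
    {N₁ : Set A} {N₂ : Set B}
    (hN₁ : ∀ Y, N₁ ⊆ Y → 0 < G₁.compCount Y → t * (G₁.compCount Y + 1 : ℝ) ≤ Y.ncard)
    (hN₂ : ∀ Y, N₂ ⊆ Y → 0 < G₂.compCount Y → t * (G₂.compCount Y + 1 : ℝ) ≤ Y.ncard)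
    (hdeg₁ : ∀ x ∈ N₁, t ≤ Set.ncard {y | R x y})
    (hdeg₂ : ∀ y ∈ N₂, t ≤ Set.ncard {x | R x y}) :
    (glueGraph G₁ G₂ R).ToughGE t := by
  intro X hX
  change 1 < compCount _ X at hX
  change t * compCount _ X ≤ _
  set X₁ := Sum.inl ⁻¹' X
  set X₂ := Sum.inr ⁻¹' X
  have hcc := glueGraph.compCount_le (G₁ := G₁) (G₂ := G₂) (R := R) X
  rw [Set.ncard_eq_ncard_preimage_inl_add X, Nat.cast_add]
  by_cases hX₁ : N₁ ⊆ X₁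
  · exact h₂.mul_le_ncard_add_of_le_add_compCount ht X₂ hX hcc (hN₁ X₁ hX₁)
  by_cases hX₂ : N₂ ⊆ X₂
  · rw [add_comm] at hcc ⊢
    exact h₁.mul_le_ncard_add_of_le_add_compCount ht X₁ hX hcc (hN₂ X₂ hX₂)
  obtain ⟨x₀, hx₀N, hx₀⟩ := Set.not_subset.1 hX₁
  obtain ⟨y₀, hy₀N, hy₀⟩ := Set.not_subset.1 hX₂
  by_cases hE : ∃ x y, R x y ∧ Sum.inl x ∉ X ∧ Sum.inr y ∉ X
  · obtain ⟨x, y, hxy, hx, hy⟩ := hE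
    exact h₁.mul_le_ncard_add_of_add_one_le h₂ ht hX (glueGraph.compCount_add_one_le hxy hx hy)
  push Not at hE
  have ht₁ : t ≤ X₁.ncard := (hdeg₂ y₀ hy₀N).trans <| by
    exact_mod_cast Set.ncard_le_ncard fun x hx => by_contra fun hxX => hy₀ (hE x y₀ hx hxX)
  have ht₂ : t ≤ X₂.ncard := (hdeg₁ x₀ hx₀N).trans <| by
    exact_mod_cast Set.ncard_le_ncard fun y hy => by_contra fun hyX => hyX (hE x₀ y hy hx₀)
  calc t * compCount _ X ≤ t * (G₁.compCount X₁ + G₂.compCount X₂ : ℝ) :=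
        mul_le_mul_of_nonneg_left (by exact_mod_cast hcc) ht
    _ ≤ X₁.ncard + X₂.ncard := by
        linarith [h₁.mul_compCount_le_of_le_ncard ht ht₁, h₂.mul_compCount_le_of_le_ncard ht ht₂]

end SimpleGraph

theorem glue_tough_general {V₁ V₂ : Type*} [Fintype V₁] [Fintype V₂]
    [DecidableEq V₁] [DecidableEq V₂] (t : ℝ)
    (G₁p : SimpleGraph V₁) (G₂p : SimpleGraph V₂) (v₁ : V₁) (v₂ : V₂)
    (h1p : G₁p.ToughGE t) (h2p : G₂p.ToughGE t)
    (h1 : (G₁p.induce {x : V₁ | x ≠ v₁}).ToughGE t)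
    (h2 : (G₂p.induce {y : V₂ | y ≠ v₂}).ToughGE t)
    (R : {x : V₁ // x ≠ v₁} → {y : V₂ // y ≠ v₂} → Prop)
    (hdeg1 : ∀ x : {x : V₁ // x ≠ v₁}, G₁p.Adj v₁ x → t ≤ Set.ncard {y | R x y})
    (hdeg2 : ∀ y : {y : V₂ // y ≠ v₂}, G₂p.Adj v₂ y → t ≤ Set.ncard {x | R x y}) :
    (glueGraph (G₁p.induce {x : V₁ | x ≠ v₁}) (G₂p.induce {y : V₂ | y ≠ v₂}) R).ToughGE t := by
  rcases le_total t 0 with ht | ht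
  · exact toughGE_of_nonpos _ ht
  exact h1.glueGraph h2 ht (N₁ := {x | G₁p.Adj v₁ x}) (N₂ := {y | G₂p.Adj v₂ y})
    (fun _ hY hc => h1p.mul_compCount_induce_ne_add_one_le ht hY hc)
    (fun _ hY hc => h2p.mul_compCount_induce_ne_add_one_le ht hY hc) hdeg1 hdeg2

theorem glue_tough {V₁ V₂ : Type*} [Fintype V₁] [Fintype V₂]
    [DecidableEq V₁] [DecidableEq V₂] (t : ℝ)
    (G₁p : SimpleGraph V₁) (G₂p : SimpleGraph V₂) (v₁ : V₁) (v₂ : V₂)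
    (h1p : G₁p.ToughGE t) (h2p : G₂p.ToughGE t)
    (h1 : (G₁p.induce {x : V₁ | x ≠ v₁}).ToughGE t)
    (h2 : (G₂p.induce {y : V₂ | y ≠ v₂}).ToughGE t)
    (R : {x : V₁ // x ≠ v₁} → {y : V₂ // y ≠ v₂} → Prop)
    (hR : ∀ x y, R x y → G₁p.Adj v₁ x ∧ G₂p.Adj v₂ y)
    (hdeg1 : ∀ x : {x : V₁ // x ≠ v₁}, G₁p.Adj v₁ x → t ≤ Set.ncard {y | R x y})
    (hdeg2 : ∀ y : {y : V₂ // y ≠ v₂}, G₂p.Adj v₂ y → t ≤ Set.ncard {x | R x y}) :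
    (glueGraph (G₁p.induce {x : V₁ | x ≠ v₁}) (G₂p.induce {y : V₂ | y ≠ v₂}) R).ToughGE t :=
  glue_tough_general t G₁p G₂p v₁ v₂ h1p h2p h1 h2 R hdeg1 hdeg2
end
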